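/- arXiv:2305.00677 — 5 statements merged into one kernel-verified Lean document; each statement's English description precedes it below -/
import Mathlib

section
/- For online optimization with single-step memory cost, the Robust algorithm that at each step t chooses x_t = argmin_x f(x, y_t) is max(2/α, 1)-competitive against the optimal offline algorithm: for every input sequence, cost(Robust) ≤ max(2/α, 1)·cost(OPT), where each hitting cost f(·, y_t) is α-polyhedral. -/
open Finset

/-- Cumulative cost of action sequence `x` over steps 1..s with single-step memory cost. -/
noncomputable def cost1 {E : Type*} [NormedAddCommGroup E] [NormedSpace ℝ E]
    (f : ℕ → E → ℝ) (x : ℕ → E) (s : ℕ) : ℝ :=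
  ∑ t ∈ Finset.Icc 1 s, (f t (x t) + ‖x t - x (t - 1)‖)

/-- The Robust algorithm choosing x_t = argmin f(·,y_t) is
max(2/α, 1)-competitive against the optimal offline algorithm. -/
theorem stmt1 {E : Type*} [NormedAddCommGroup E] [NormedSpace ℝ E]
    (T : ℕ) (α : ℝ) (hα : 0 < α) (f : ℕ → E → ℝ)
    (hf : ∀ t z, 0 ≤ f t z)
    (v : ℕ → E)
    (hmin : ∀ t z, f t (v t) ≤ f t z)
    (hpoly : ∀ t z, α * ‖z - v t‖ ≤ f t z - f t (v t))
    (x0 : E) (xπ : ℕ → E) (hπ0 : xπ 0 = x0) (hπ : ∀ t, 1 ≤ t → xπ t = v t)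
    (xstar : ℕ → E) (hstar0 : xstar 0 = x0) :
    cost1 f xπ T ≤ max (2 / α) 1 * cost1 f xstar T := by
  set A : ℕ → ℝ := fun t => ‖xstar t - xπ t‖ with hA
  have hA0 : A 0 = 0 := by simp [hA, hπ0, hstar0]
  have hAnn : ∀ t, 0 ≤ A t := fun t => norm_nonneg _
  have hAf : ∀ t, 1 ≤ t → α * A t ≤ f t (xstar t) := by
    intro t ht
    have h1 := hpoly t (xstar t)
    have h2 := hf t (v t)
    simp only [hA, hπ t ht]
    linarith
  -- per-step inequality
  have hstep : ∀ t ∈ Finset.Icc 1 T,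
      f t (xπ t) + ‖xπ t - xπ (t - 1)‖ ≤
        (f t (xstar t) + ‖xstar t - xstar (t - 1)‖) + ((1 - α) * A t + A (t - 1)) := by
    intro t ht
    have ht1 : 1 ≤ t := (Finset.mem_Icc.mp ht).1
    have hxt : xπ t = v t := hπ t ht1
    have h1 := hpoly t (xstar t)
    have htri : ‖v t - xπ (t - 1)‖ ≤
        ‖v t - xstar t‖ + ‖xstar t - xstar (t - 1)‖ + ‖xstar (t - 1) - xπ (t - 1)‖ := by
      calc ‖v t - xπ (t - 1)‖ ≤ ‖v t - xstar (t - 1)‖ + ‖xstar (t - 1) - xπ (t - 1)‖ :=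
            norm_sub_le_norm_sub_add_norm_sub _ _ _
        _ ≤ (‖v t - xstar t‖ + ‖xstar t - xstar (t - 1)‖) + ‖xstar (t - 1) - xπ (t - 1)‖ := by
            have := norm_sub_le_norm_sub_add_norm_sub (v t) (xstar t) (xstar (t - 1))
            linarith
    have hAt : A t = ‖v t - xstar t‖ := by
      simp [hA, hxt, norm_sub_rev]
    rw [hxt]
    simp only [hA] at *
    rw [hAt]
    rw [norm_sub_rev (xstar t)] at h1
    linarith
  have hsum : cost1 f xπ T ≤ cost1 f xstar T +
      ∑ t ∈ Finset.Icc 1 T, ((1 - α) * A t + A (t - 1)) := by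
    unfold cost1
    rw [← Finset.sum_add_distrib]
    exact Finset.sum_le_sum hstep
  -- shifted sum identity
  have hshift : ∀ n : ℕ, ∑ t ∈ Finset.Icc 1 n, A (t - 1) = (∑ t ∈ Finset.Icc 1 n, A t) - A n := by
    intro n
    induction n with
    | zero => simp [hA0]
    | succ n ih =>
        rw [Finset.sum_Icc_succ_top (by omega), Finset.sum_Icc_succ_top (by omega), ih]
        simp
  set S : ℝ := ∑ t ∈ Finset.Icc 1 T, A t with hS
  have hSnn : 0 ≤ S := Finset.sum_nonneg fun t _ => hAnn t
  have hsum2 : cost1 f xπ T ≤ cost1 f xstar T + (2 - α) * S := by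
    have h1 : ∑ t ∈ Finset.Icc 1 T, ((1 - α) * A t + A (t - 1)) =
        (1 - α) * S + (S - A T) := by
      rw [Finset.sum_add_distrib, ← Finset.mul_sum, hshift]
    have h2 := hAnn T
    rw [h1] at hsum
    nlinarith
  set F : ℝ := ∑ t ∈ Finset.Icc 1 T, f t (xstar t) with hF
  have hFS : α * S ≤ F := by
    rw [hS, hF, Finset.mul_sum]
    exact Finset.sum_le_sum fun t ht => hAf t (Finset.mem_Icc.mp ht).1
  have hFcost : F ≤ cost1 f xstar T := by
    unfold cost1
    rw [hF]
    exact Finset.sum_le_sum fun t _ => by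
      have := norm_nonneg (xstar t - xstar (t - 1)); linarith
  have hcostnn : 0 ≤ cost1 f xstar T := by
    unfold cost1
    exact Finset.sum_nonneg fun t _ => add_nonneg (hf _ _) (norm_nonneg _)
  rcases le_or_gt α 2 with hle | hgt
  · have h1le : (1 : ℝ) ≤ 2 / α := (one_le_div hα).mpr hle
    rw [max_eq_left h1le]
    have h2 : (2 - α) * S ≤ (2 - α) / α * F := by
      rcases eq_or_lt_of_le hle with heq | hlt
      · simp [← heq]
      · have : S ≤ F / α := (le_div_iff₀ hα).mpr (by linarith [hFS])
        have h2α : 0 ≤ 2 - α := by linarith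
        calc (2 - α) * S ≤ (2 - α) * (F / α) := by nlinarith
          _ = (2 - α) / α * F := by ring
    have h3 : (2 - α) / α * F ≤ (2 - α) / α * cost1 f xstar T := by
      exact mul_le_mul_of_nonneg_left hFcost (div_nonneg (by linarith) hα.le)
    have : cost1 f xπ T ≤ cost1 f xstar T + (2 - α) / α * cost1 f xstar T := by linarith
    have heq : cost1 f xstar T + (2 - α) / α * cost1 f xstar T = 2 / α * cost1 f xstar T := by
      field_simp
      ring
    linarith
  · have h2 : (2 - α) * S ≤ 0 := mul_nonpos_of_nonpos_of_nonneg (by linarith) hSnn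
    have hmax : (1 : ℝ) ≤ max (2 / α) 1 := le_max_right _ _
    nlinarith
end

section
/- For online optimization with multi-step memory cost d(x_t, x_{t−q:t−1}) = ‖x_t − ∑_{i=1}^q C_i x_{t−i}‖, where each hitting cost f(·, y_t) is α-polyhedral and β = ∑_{i=1}^q ‖C_i‖ (induced matrix norm), the Robust algorithm choosing x_t = argmin_x f(x, y_t) at every step is strictly max((β+1)/α, 1)-competitive against the optimal offline algorithm: cost(Robust) ≤ max((β+1)/α, 1)·cost(OPT) for every input. -/
/-!
The Robust trajectory pays the least possible hitting cost, so it can only lose on memory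
cost. With `δ t = ‖xπ t - xstar t‖`, which vanishes up to time `0` by the shared
initialization, the triangle inequality bounds the memory cost of `xπ` by that of `xstar`
plus `δ t + ∑ i, ‖C i‖ * δ (t - i)`; summing over `t`, every shifted sum of `δ` is at most
`∑ t, δ t`, so the extra memory cost is at most `(1 + β) ∑ t, δ t`. Polyhedrality gives
`α ∑ t, δ t ≤ F(xstar) - F(xπ)` for the total hitting costs `F`, hence
`cost(xπ) ≤ F(xπ) + (β + 1) / α * (F(xstar) - F(xπ)) + Mem(xstar)`,
which is at most `max ((β + 1) / α) 1 * cost(xstar)` because `0 ≤ F(xπ) ≤ F(xstar)`.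
-/

open Finset

/-- Cumulative cost of action sequence `x` over steps 1..s with multi-step memory cost
‖x_t − ∑_{i=1}^q C_i x_{t−i}‖. Actions are indexed by ℤ to allow the initialization
x_{−q+1}, …, x_0. -/
noncomputable def costM {E : Type*} [NormedAddCommGroup E] [NormedSpace ℝ E]
    (q : ℕ) (C : ℕ → E →L[ℝ] E) (f : ℤ → E → ℝ) (x : ℤ → E) (s : ℤ) : ℝ :=
  ∑ t ∈ Finset.Icc 1 s, (f t (x t) + ‖x t - ∑ i ∈ Finset.Icc 1 q, C i (x (t - (i : ℤ)))‖)

theorem sum_Icc_comp_sub_le {δ : ℤ → ℝ} (hδ : ∀ s, 0 ≤ δ s) (hδ0 : ∀ s ≤ 0, δ s = 0)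
    (T : ℤ) {k : ℤ} (hk : 0 ≤ k) :
    ∑ t ∈ Icc 1 T, δ (t - k) ≤ ∑ t ∈ Icc 1 T, δ t := by
  calc ∑ t ∈ Icc 1 T, δ (t - k) = ∑ t ∈ Icc (1 + k) T, δ (t - k) := by
        refine (sum_subset (Icc_subset_Icc (by omega) le_rfl) fun t ht ht' => hδ0 _ ?_).symm
        simp only [mem_Icc] at ht ht'
        omega
    _ = ∑ s ∈ Icc 1 (T - k), δ s := by
        rw [← sub_add_cancel T k, ← map_add_right_Icc, sum_map, add_sub_cancel_right]
        simp
    _ ≤ ∑ t ∈ Icc 1 T, δ t :=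
        sum_le_sum_of_subset_of_nonneg (Icc_subset_Icc le_rfl (by omega)) fun s _ _ => hδ s

theorem add_mul_sub_le_max_mul {a b c : ℝ} (ha : 0 ≤ a) (hab : a ≤ b) :
    a + c * (b - a) ≤ max c 1 * b := by
  rcases le_total c 1 with h | h
  · rw [max_eq_right h]; nlinarith
  · rw [max_eq_left h]; nlinarith

section Memory

variable {E : Type*} [NormedAddCommGroup E] [NormedSpace ℝ E] (q : ℕ) (C : ℕ → E →L[ℝ] E)

noncomputable def memoryCost (x : ℤ → E) (t : ℤ) : ℝ :=
  ‖x t - ∑ i ∈ Icc 1 q, C i (x (t - i))‖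

theorem costM_eq (f : ℤ → E → ℝ) (x : ℤ → E) (T : ℤ) :
    costM q C f x T = ∑ t ∈ Icc 1 T, f t (x t) + ∑ t ∈ Icc 1 T, memoryCost q C x t :=
  sum_add_distrib

theorem memoryCost_le (x y : ℤ → E) (t : ℤ) :
    memoryCost q C x t ≤ memoryCost q C y t + ‖x t - y t‖
      + ∑ i ∈ Icc 1 q, ‖C i‖ * ‖x (t - i) - y (t - i)‖ := by
  have hlag : ‖∑ i ∈ Icc 1 q, C i (y (t - i)) - ∑ i ∈ Icc 1 q, C i (x (t - i))‖
      ≤ ∑ i ∈ Icc 1 q, ‖C i‖ * ‖x (t - i) - y (t - i)‖ := by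
    rw [← sum_sub_distrib]
    refine norm_sum_le_of_le _ fun i _ => ?_
    rw [← map_sub, norm_sub_rev (x _)]
    exact (C i).le_opNorm _
  have hsplit : x t - ∑ i ∈ Icc 1 q, C i (x (t - i)) = (x t - y t)
      + (y t - ∑ i ∈ Icc 1 q, C i (y (t - i)))
      + (∑ i ∈ Icc 1 q, C i (y (t - i)) - ∑ i ∈ Icc 1 q, C i (x (t - i))) := by abel
  rw [memoryCost, memoryCost, hsplit]
  refine norm_add₃_le.trans ?_
  linarith

theorem sum_memoryCost_le (x y : ℤ → E) (hxy : ∀ s ≤ 0, x s = y s) (T : ℤ) :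
    ∑ t ∈ Icc 1 T, memoryCost q C x t ≤ ∑ t ∈ Icc 1 T, memoryCost q C y t
      + (1 + ∑ i ∈ Icc 1 q, ‖C i‖) * ∑ t ∈ Icc 1 T, ‖x t - y t‖ := by
  set δ : ℤ → ℝ := fun s => ‖x s - y s‖
  have hδ0 : ∀ s ≤ 0, δ s = 0 := fun s hs => by simp [δ, hxy s hs]
  have hlag : ∑ t ∈ Icc 1 T, ∑ i ∈ Icc 1 q, ‖C i‖ * δ (t - i)
      ≤ (∑ i ∈ Icc 1 q, ‖C i‖) * ∑ t ∈ Icc 1 T, δ t := by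
    rw [sum_comm, sum_mul]
    refine sum_le_sum fun i _ => ?_
    rw [← mul_sum]
    exact mul_le_mul_of_nonneg_left
      (sum_Icc_comp_sub_le (fun s => norm_nonneg _) hδ0 T (Int.natCast_nonneg i)) (norm_nonneg _)
  calc ∑ t ∈ Icc 1 T, memoryCost q C x t
      ≤ ∑ t ∈ Icc 1 T, (memoryCost q C y t + δ t + ∑ i ∈ Icc 1 q, ‖C i‖ * δ (t - i)) :=
        sum_le_sum fun t _ => memoryCost_le q C x y t
    _ ≤ _ := by
        simp only [sum_add_distrib]
        linarith

end Memory

theorem stmt2_general {E : Type*} [NormedAddCommGroup E] [NormedSpace ℝ E]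
    (T : ℤ) (q : ℕ) (C : ℕ → E →L[ℝ] E) (β : ℝ) (hβ : β = ∑ i ∈ Finset.Icc 1 q, ‖C i‖)
    (α : ℝ) (hα : 0 < α) (f : ℤ → E → ℝ)
    (hf : ∀ t z, 0 ≤ f t z)
    (v : ℤ → E)
    (hpoly : ∀ t z, α * ‖z - v t‖ ≤ f t z - f t (v t))
    (xπ : ℤ → E) (hπ : ∀ t : ℤ, 1 ≤ t → xπ t = v t)
    (xstar : ℤ → E) (hinit : ∀ s : ℤ, s ≤ 0 → xπ s = xstar s) :
    costM q C f xπ T ≤ max ((β + 1) / α) 1 * costM q C f xstar T := by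
  set c := (β + 1) / α
  set Δ := ∑ t ∈ Icc 1 T, ‖xπ t - xstar t‖
  set Fπ := ∑ t ∈ Icc 1 T, f t (xπ t)
  set Fstar := ∑ t ∈ Icc 1 T, f t (xstar t)
  set Mstar := ∑ t ∈ Icc 1 T, memoryCost q C xstar t
  have hc : 0 ≤ c := div_nonneg (by rw [hβ]; positivity) hα.le
  have hhit : α * Δ ≤ Fstar - Fπ := by
    rw [mul_sum, ← sum_sub_distrib]
    refine sum_le_sum fun t ht => ?_
    rw [hπ t (mem_Icc.mp ht).1, norm_sub_rev]
    exact hpoly t (xstar t)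
  have hmove : ∑ t ∈ Icc 1 T, memoryCost q C xπ t ≤ Mstar + c * (α * Δ) := by
    have h := sum_memoryCost_le q C xπ xstar hinit T
    rwa [← hβ, show (1 + β) * Δ = c * (α * Δ) by simp only [c]; field_simp; ring] at h
  have hΔ : 0 ≤ α * Δ := mul_nonneg hα.le (sum_nonneg fun t _ => norm_nonneg _)
  rw [costM_eq, costM_eq]
  calc Fπ + ∑ t ∈ Icc 1 T, memoryCost q C xπ t ≤ Fπ + c * (Fstar - Fπ) + Mstar := by
        linarith [mul_le_mul_of_nonneg_left hhit hc]
    _ ≤ max c 1 * Fstar + max c 1 * Mstar := by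
        gcongr ?_ + ?_
        · exact add_mul_sub_le_max_mul (sum_nonneg fun t _ => hf t _) (by linarith)
        · exact le_mul_of_one_le_left (sum_nonneg fun t _ => norm_nonneg _) (le_max_right _ _)
    _ = max c 1 * (Fstar + Mstar) := by ring

/-- In the multi-step memory setting with β = ∑_{i=1}^q ‖C_i‖, the Robust
algorithm is strictly max((β+1)/α, 1)-competitive against the optimal offline algorithm. -/
theorem stmt2 {E : Type*} [NormedAddCommGroup E] [NormedSpace ℝ E]
    (T : ℤ) (q : ℕ) (C : ℕ → E →L[ℝ] E) (β : ℝ) (hβ : β = ∑ i ∈ Finset.Icc 1 q, ‖C i‖)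
    (α : ℝ) (hα : 0 < α) (f : ℤ → E → ℝ)
    (hf : ∀ t z, 0 ≤ f t z)
    (v : ℤ → E)
    (hmin : ∀ t z, f t (v t) ≤ f t z)
    (hpoly : ∀ t z, α * ‖z - v t‖ ≤ f t z - f t (v t))
    (xπ : ℤ → E) (hπ : ∀ t : ℤ, 1 ≤ t → xπ t = v t)
    (xstar : ℤ → E) (hinit : ∀ s : ℤ, s ≤ 0 → xπ s = xstar s) :
    costM q C f xπ T ≤ max ((β + 1) / α) 1 * costM q C f xstar T :=
  stmt2_general T q C β hβ α hα f hf v hpoly xπ hπ xstar hinit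
end

section
/- In the case α > β + 1 of the multi-step memory setting, the Robust algorithm choosing x_t = argmin_x f(x, y_t) is optimal, i.e., its total cost equals the optimal offline cost (is at most cost(OPT)) for every input sequence. -/
/-!
Since `f t` is `α`-polyhedral around its minimiser `v t`, moving from `x*_t` to `v_t` saves at least
`α ‖x*_t - v_t‖` of hitting cost. The same move changes the memory cost at time `t` by at most
`‖x*_t - v_t‖`, and at each later time `t + i` by at most `‖C i‖ ‖x*_t - v_t‖`, so by at most
`(1 + β) ‖x*_t - v_t‖` in total. As the two trajectories share their initialisation, these charges
account for every difference, and `1 + β < α` makes the net change non-positive.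
-/

open Finset

theorem sum_Icc_comp_sub_le_s3 {M : Type*} [AddCommMonoid M] [PartialOrder M] [IsOrderedAddMonoid M]
    (D : ℤ → M) (hD : ∀ s, 0 ≤ D s) (hD0 : ∀ s ≤ 0, D s = 0) (T : ℤ) (i : ℕ) :
    ∑ t ∈ Icc 1 T, D (t - i) ≤ ∑ t ∈ Icc 1 T, D t := by
  have hshift : Icc (1 : ℤ) T = (Icc (1 - (i : ℤ)) (T - i)).map (addRightEmbedding (i : ℤ)) := by simp
  calc ∑ t ∈ Icc 1 T, D (t - i) = ∑ s ∈ Icc (1 - (i : ℤ)) (T - i), D s := by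
        rw [hshift, sum_map]; simp
    _ = ∑ s ∈ Icc (1 - (i : ℤ)) (T - i) with 0 < s, D s :=
        (sum_filter_of_ne fun s _ hs => by by_contra h; exact hs (hD0 s (by omega))).symm
    _ ≤ ∑ t ∈ Icc 1 T, D t :=
        sum_le_sum_of_subset_of_nonneg (fun s hs => by simp only [mem_filter, mem_Icc] at hs ⊢; omega)
          fun s _ _ => hD s

theorem sum_Icc_sum_mul_comp_sub_le (s : Finset ℕ) (w : ℕ → ℝ)
    (hw : ∀ i, 0 ≤ w i) (D : ℤ → ℝ) (hD : ∀ s, 0 ≤ D s) (hD0 : ∀ s ≤ 0, D s = 0) (T : ℤ) :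
    ∑ t ∈ Icc 1 T, ∑ i ∈ s, w i * D (t - i) ≤ (∑ i ∈ s, w i) * ∑ t ∈ Icc 1 T, D t := by
  rw [sum_comm, sum_mul]
  gcongr with i
  rw [← mul_sum]
  exact mul_le_mul_of_nonneg_left (sum_Icc_comp_sub_le_s3 D hD hD0 T i) (hw i)

theorem norm_sub_sum_apply_le {ι 𝕜 E F : Type*} [NontriviallyNormedField 𝕜]
    [SeminormedAddCommGroup E] [SeminormedAddCommGroup F] [NormedSpace 𝕜 E] [NormedSpace 𝕜 F]
    (s : Finset ι) (C : ι → E →L[𝕜] F) (a b : F) (x y : ι → E) :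
    ‖a - ∑ i ∈ s, C i (x i)‖ ≤ ‖b - ∑ i ∈ s, C i (y i)‖ + ‖a - b‖ + ∑ i ∈ s, ‖C i‖ * ‖x i - y i‖ := by
  have hdecomp : a - ∑ i ∈ s, C i (x i)
      = (b - ∑ i ∈ s, C i (y i)) + (a - b) + ∑ i ∈ s, C i (y i - x i) := by
    simp only [map_sub, sum_sub_distrib]; abel
  rw [hdecomp]
  refine norm_add₃_le.trans ?_
  gcongr
  refine (norm_sum_le _ _).trans (sum_le_sum fun i _ => ?_)
  rw [norm_sub_rev]
  exact (C i).le_opNorm _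

theorem costM_le_costM_add {E : Type*} [NormedAddCommGroup E] [NormedSpace ℝ E]
    (q : ℕ) (C : ℕ → E →L[ℝ] E) (f : ℤ → E → ℝ) (x y : ℤ → E) (hxy : ∀ s ≤ 0, x s = y s)
    (T : ℤ) :
    costM q C f x T ≤ costM q C f y T + ∑ t ∈ Icc 1 T,
      (f t (x t) - f t (y t) + (1 + ∑ i ∈ Icc 1 q, ‖C i‖) * ‖x t - y t‖) := by
  set D : ℤ → ℝ := fun s => ‖x s - y s‖
  have hlag := sum_Icc_sum_mul_comp_sub_le (Icc 1 q) (fun i => ‖C i‖) (fun i => norm_nonneg _)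
    D (fun s => norm_nonneg _) (fun s hs => by simp [D, hxy s hs]) T
  have hstep : ∀ t ∈ Icc 1 T, f t (x t) + ‖x t - ∑ i ∈ Icc 1 q, C i (x (t - i))‖ ≤
      f t (x t) + (‖y t - ∑ i ∈ Icc 1 q, C i (y (t - i))‖ + D t
        + ∑ i ∈ Icc 1 q, ‖C i‖ * D (t - i)) := fun t _ => by
    gcongr
    exact norm_sub_sum_apply_le _ C _ _ (fun i => x (t - i)) (fun i => y (t - i))
  unfold costM
  refine (sum_le_sum hstep).trans ?_
  simp only [sum_add_distrib, sum_sub_distrib, add_mul, one_mul, ← mul_sum] at hlag ⊢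
  linarith

theorem stmt3_general {E : Type*} [NormedAddCommGroup E] [NormedSpace ℝ E]
    (T : ℤ) (q : ℕ) (C : ℕ → E →L[ℝ] E) (β : ℝ) (hβ : β = ∑ i ∈ Finset.Icc 1 q, ‖C i‖)
    (α : ℝ) (hcase : β + 1 < α) (f : ℤ → E → ℝ)
    (v : ℤ → E)
    (hpoly : ∀ t z, α * ‖z - v t‖ ≤ f t z - f t (v t))
    (xπ : ℤ → E) (hπ : ∀ t : ℤ, 1 ≤ t → xπ t = v t)
    (xstar : ℤ → E) (hinit : ∀ s : ℤ, s ≤ 0 → xπ s = xstar s) :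
    costM q C f xπ T ≤ costM q C f xstar T := by
  refine (costM_le_costM_add q C f xπ xstar hinit T).trans (add_le_of_nonpos_right ?_)
  refine sum_nonpos fun t ht => ?_
  rw [hπ t (mem_Icc.1 ht).1, ← hβ, norm_sub_rev]
  have hslack := mul_le_mul_of_nonneg_right hcase.le (norm_nonneg (xstar t - v t))
  linarith [hpoly t (xstar t)]

/-- In the case α > β + 1 of the multi-step memory setting, Robust is optimal:
its total cost is at most cost(OPT) on every input sequence. -/
theorem stmt3 {E : Type*} [NormedAddCommGroup E] [NormedSpace ℝ E]
    (T : ℤ) (q : ℕ) (C : ℕ → E →L[ℝ] E) (β : ℝ) (hβ : β = ∑ i ∈ Finset.Icc 1 q, ‖C i‖)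
    (α : ℝ) (hα : 0 < α) (hcase : β + 1 < α) (f : ℤ → E → ℝ)
    (hf : ∀ t z, 0 ≤ f t z)
    (v : ℤ → E)
    (hmin : ∀ t z, f t (v t) ≤ f t z)
    (hpoly : ∀ t z, α * ‖z - v t‖ ≤ f t z - f t (v t))
    (xπ : ℤ → E) (hπ : ∀ t : ℤ, 1 ≤ t → xπ t = v t)
    (xstar : ℤ → E) (hinit : ∀ s : ℤ, s ≤ 0 → xπ s = xstar s) :
    costM q C f xπ T ≤ costM q C f xstar T :=
  stmt3_general T q C β hβ α hcase f v hpoly xπ hπ xstar hinit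
end

section
/- For any offline and online sequences (x*_t) and (x^π_t) with x^π_t = v_t the minimizer of the α-polyhedral cost f(·, y_t), and common initialization x^π_t = x*_t for t ∈ [−q+1, 0], the online memory cost satisfies ∑_{t=1}^T ‖x^π_t − ∑_{i=1}^q C_i x^π_{t−i}‖ ≤ ∑_{t=1}^T ‖x*_t − ∑_{i=1}^q C_i x*_{t−i}‖ + (1/α)(1 + ∑_{i=1}^q ‖C_i‖)·∑_{t=1}^T (f(x*_t, y_t) − f(x^π_t, y_t)). -/
open Finset

/-- The online memory cost of the Robust sequence is bounded by the offline
memory cost plus (1/α)(1 + ∑‖C_i‖) times the total hitting-cost advantage of Robust. -/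
theorem stmt4 {E : Type*} [NormedAddCommGroup E] [NormedSpace ℝ E]
    (T : ℤ) (q : ℕ) (C : ℕ → E →L[ℝ] E)
    (α : ℝ) (hα : 0 < α) (f : ℤ → E → ℝ)
    (v : ℤ → E)
    (hmin : ∀ t z, f t (v t) ≤ f t z)
    (hpoly : ∀ t z, α * ‖z - v t‖ ≤ f t z - f t (v t))
    (xπ : ℤ → E) (hπ : ∀ t : ℤ, 1 ≤ t → xπ t = v t)
    (xstar : ℤ → E) (hinit : ∀ s : ℤ, s ≤ 0 → xπ s = xstar s) :
    ∑ t ∈ Finset.Icc (1 : ℤ) T, ‖xπ t - ∑ i ∈ Finset.Icc 1 q, C i (xπ (t - (i : ℤ)))‖ ≤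
      (∑ t ∈ Finset.Icc (1 : ℤ) T, ‖xstar t - ∑ i ∈ Finset.Icc 1 q, C i (xstar (t - (i : ℤ)))‖)
        + (1 / α) * (1 + ∑ i ∈ Finset.Icc 1 q, ‖C i‖) *
            ∑ t ∈ Finset.Icc (1 : ℤ) T, (f t (xstar t) - f t (xπ t)) := by
  set G : ℤ → ℝ := fun s => ‖xπ s - xstar s‖ with hGdef
  have hGnn : ∀ s, 0 ≤ G s := fun s => norm_nonneg _
  have hG0 : ∀ s : ℤ, s ≤ 0 → G s = 0 := by
    intro s hs; simp [hGdef, hinit s hs]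
  set S : ℝ := ∑ t ∈ Finset.Icc (1 : ℤ) T, G t with hSdef
  set D : ℝ := ∑ t ∈ Finset.Icc (1 : ℤ) T, (f t (xstar t) - f t (xπ t)) with hDdef
  have hSnn : 0 ≤ S := Finset.sum_nonneg fun t _ => hGnn t
  have key : ∀ t ∈ Finset.Icc (1 : ℤ) T, α * G t ≤ f t (xstar t) - f t (xπ t) := by
    intro t ht
    have h1 := (Finset.mem_Icc.mp ht).1
    rw [hπ t h1]
    have := hpoly t (xstar t)
    have hGt : G t = ‖xstar t - v t‖ := by
      simp [hGdef, hπ t h1, norm_sub_rev]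
    rw [hGt]; linarith
  have hSD : α * S ≤ D := by
    rw [hSdef, hDdef, Finset.mul_sum]
    exact Finset.sum_le_sum key
  -- shift lemma: shifted sums of G over [1,T] are bounded by S
  have shift : ∀ i : ℕ, ∑ t ∈ Finset.Icc (1 : ℤ) T, G (t - (i : ℤ)) ≤ S := by
    intro i
    have hmap : ∑ t ∈ Finset.Icc (1 : ℤ) T, G (t - (i : ℤ))
        = ∑ s ∈ Finset.Icc (1 - (i : ℤ)) (T - (i : ℤ)), G s := by
      rw [show Finset.Icc (1 - (i : ℤ)) (T - (i : ℤ))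
          = (Finset.Icc (1 : ℤ) T).map (addRightEmbedding (-(i : ℤ))) by
        rw [Finset.map_add_right_Icc]; ring_nf]
      rw [Finset.sum_map]
      simp [addRightEmbedding, sub_eq_add_neg]
    set A := Finset.Icc (1 - (i : ℤ)) (T - (i : ℤ)) with hA
    have hfilter : ∑ s ∈ A, G s = ∑ s ∈ A.filter (fun s => 1 ≤ s), G s := by
      refine (Finset.sum_subset (Finset.filter_subset _ _) ?_).symm
      intro s hsA hs
      apply hG0
      by_contra h
      push_neg at h
      exact hs (Finset.mem_filter.mpr ⟨hsA, h⟩)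
    have hsub : A.filter (fun s => 1 ≤ s) ⊆ Finset.Icc (1 : ℤ) T := by
      intro s hs
      rcases Finset.mem_filter.mp hs with ⟨hsA, h1⟩
      rcases Finset.mem_Icc.mp hsA with ⟨_, h2⟩
      refine Finset.mem_Icc.mpr ⟨h1, ?_⟩
      have : (0 : ℤ) ≤ (i : ℤ) := Int.ofNat_nonneg i
      omega
    rw [hmap, hfilter, hSdef]
    exact Finset.sum_le_sum_of_subset_of_nonneg hsub fun t _ _ => hGnn t
  -- pointwise bound
  have point : ∀ t ∈ Finset.Icc (1 : ℤ) T,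
      ‖xπ t - ∑ i ∈ Finset.Icc 1 q, C i (xπ (t - (i : ℤ)))‖ ≤
        ‖xstar t - ∑ i ∈ Finset.Icc 1 q, C i (xstar (t - (i : ℤ)))‖ + G t
          + ∑ i ∈ Finset.Icc 1 q, ‖C i‖ * G (t - (i : ℤ)) := by
    intro t _
    have heq : xπ t - ∑ i ∈ Finset.Icc 1 q, C i (xπ (t - (i : ℤ)))
        = (xstar t - ∑ i ∈ Finset.Icc 1 q, C i (xstar (t - (i : ℤ))))
          + (xπ t - xstar t)
          + ∑ i ∈ Finset.Icc 1 q, (C i (xstar (t - (i : ℤ))) - C i (xπ (t - (i : ℤ)))) := by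
      rw [Finset.sum_sub_distrib]; abel
    rw [heq]
    refine (norm_add₃_le).trans ?_
    gcongr
    · refine (norm_sum_le _ _).trans ?_
      apply Finset.sum_le_sum
      intro i _
      calc ‖C i (xstar (t - (i : ℤ))) - C i (xπ (t - (i : ℤ)))‖
          = ‖C i (xstar (t - (i : ℤ)) - xπ (t - (i : ℤ)))‖ := by rw [map_sub]
        _ ≤ ‖C i‖ * ‖xstar (t - (i : ℤ)) - xπ (t - (i : ℤ))‖ := (C i).le_opNorm _
        _ = ‖C i‖ * G (t - (i : ℤ)) := by rw [hGdef]; simp [norm_sub_rev]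
  calc ∑ t ∈ Finset.Icc (1 : ℤ) T, ‖xπ t - ∑ i ∈ Finset.Icc 1 q, C i (xπ (t - (i : ℤ)))‖
      ≤ ∑ t ∈ Finset.Icc (1 : ℤ) T,
          (‖xstar t - ∑ i ∈ Finset.Icc 1 q, C i (xstar (t - (i : ℤ)))‖ + G t
            + ∑ i ∈ Finset.Icc 1 q, ‖C i‖ * G (t - (i : ℤ))) := Finset.sum_le_sum point
    _ = (∑ t ∈ Finset.Icc (1 : ℤ) T, ‖xstar t - ∑ i ∈ Finset.Icc 1 q, C i (xstar (t - (i : ℤ)))‖)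
          + S + ∑ i ∈ Finset.Icc 1 q, ‖C i‖ * ∑ t ∈ Finset.Icc (1 : ℤ) T, G (t - (i : ℤ)) := by
        rw [Finset.sum_add_distrib, Finset.sum_add_distrib]
        congr 1
        rw [Finset.sum_comm]
        exact Finset.sum_congr rfl fun i _ => (Finset.mul_sum _ _ _).symm
    _ ≤ (∑ t ∈ Finset.Icc (1 : ℤ) T, ‖xstar t - ∑ i ∈ Finset.Icc 1 q, C i (xstar (t - (i : ℤ)))‖)
          + S + ∑ i ∈ Finset.Icc 1 q, ‖C i‖ * S := by
        gcongr with i hi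
        exact shift i

    _ = (∑ t ∈ Finset.Icc (1 : ℤ) T, ‖xstar t - ∑ i ∈ Finset.Icc 1 q, C i (xstar (t - (i : ℤ)))‖)
          + (1 + ∑ i ∈ Finset.Icc 1 q, ‖C i‖) * S := by
        rw [← Finset.sum_mul]; ring
    _ ≤ (∑ t ∈ Finset.Icc (1 : ℤ) T, ‖xstar t - ∑ i ∈ Finset.Icc 1 q, C i (xstar (t - (i : ℤ)))‖)
          + (1 / α) * (1 + ∑ i ∈ Finset.Icc 1 q, ‖C i‖) * D := by
        have hc : (0 : ℝ) ≤ 1 + ∑ i ∈ Finset.Icc 1 q, ‖C i‖ := by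
          have : (0 : ℝ) ≤ ∑ i ∈ Finset.Icc 1 q, ‖C i‖ :=
            Finset.sum_nonneg fun i _ => norm_nonneg _
          linarith
        have hSle : S ≤ (1 / α) * D := by
          rw [div_mul_eq_mul_div, le_div_iff₀ hα] at *
          nlinarith
        nlinarith [mul_le_mul_of_nonneg_left hSle hc]
end

section
/- Feasibility invariant for ERL with multi-step memory: if cost(x_{1:t−1}) + G(x_{t−1}, x_{t−q−1:t−2}, x^π_{t−q−1:t−1}) ≤ λ·cost(x^π_{1:t−1}) + B, then the expert action x^π_t satisfies cost(x_{1:t−1}) + f(x^π_t, y_t) + ‖x^π_t − ∑_{i=1}^q C_i x_{t−i}‖ + G(x^π_t, x_{t−q:t−1}, x^π_{t−q:t}) ≤ λ·cost(x^π_{1:t}) + B; consequently ERL's projection constraint set is nonempty at every step and cost(ERL) ≤ λ·cost(π) + B. -/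
open Finset

/-- The reservation cost G(x, x_{t−q:t−1}, x^π_{t−q:t}) in ERL's multi-step projection. -/
noncomputable def Gres {E : Type*} [NormedAddCommGroup E] [NormedSpace ℝ E]
    (q : ℕ) (C : ℕ → E →L[ℝ] E) (x : E) (xs πs : ℤ → E) (t : ℤ) : ℝ :=
  ∑ k ∈ Finset.Icc 1 q,
    ‖C k x + ∑ i ∈ Finset.Icc 1 (q - k), C (k + i) (xs (t - (i : ℤ)))
        - ∑ i ∈ Finset.Icc 0 (q - k), C (k + i) (πs (t - (i : ℤ)))‖

lemma costM_succ {E : Type*} [NormedAddCommGroup E] [NormedSpace ℝ E]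
    (q : ℕ) (C : ℕ → E →L[ℝ] E) (f : ℤ → E → ℝ) (y : ℤ → E) (t : ℤ) (ht : 1 ≤ t) :
    costM q C f y t = costM q C f y (t - 1)
      + (f t (y t) + ‖y t - ∑ i ∈ Finset.Icc 1 q, C i (y (t - (i : ℤ)))‖) := by
  unfold costM
  rw [show Finset.Icc (1:ℤ) t = insert t (Finset.Icc 1 (t-1)) by ext a; simp; omega,
    Finset.sum_insert (by simp)]
  ring

lemma Gres_nonneg {E : Type*} [NormedAddCommGroup E] [NormedSpace ℝ E]
    (q : ℕ) (C : ℕ → E →L[ℝ] E) (z : E) (xs πs : ℤ → E) (t : ℤ) :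
    0 ≤ Gres q C z xs πs t :=
  Finset.sum_nonneg fun _ _ => norm_nonneg _

lemma key_telescope {E : Type*} [NormedAddCommGroup E] [NormedSpace ℝ E]
    (q : ℕ) (C : ℕ → E →L[ℝ] E) (x xπ : ℤ → E) (t : ℤ) :
    Gres q C (xπ t) x xπ t
      + ‖∑ i ∈ Finset.Icc 1 q, C i (x (t - (i:ℤ)) - xπ (t - (i:ℤ)))‖
      = Gres q C (x (t - 1)) x xπ (t - 1) := by
  set S : ℕ → ℝ := fun m =>
    ‖∑ j ∈ Finset.Icc 1 (q - m), C (m + j) (x (t - (j:ℤ)) - xπ (t - (j:ℤ)))‖ with hS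
  have h1 : Gres q C (xπ t) x xπ t = ∑ k ∈ Finset.Icc 1 q, S k := by
    unfold Gres
    refine Finset.sum_congr rfl fun k hk => ?_
    congr 1
    rw [show Finset.Icc 0 (q-k) = insert 0 (Finset.Icc 1 (q-k)) by ext a; simp; omega,
      Finset.sum_insert (by simp)]
    simp only [Nat.add_zero, Nat.cast_zero, sub_zero, map_sub, Finset.sum_sub_distrib]
    abel
  have h2 : Gres q C (x (t-1)) x xπ (t-1) = ∑ k ∈ Finset.Icc 1 q, S (k-1) := by
    unfold Gres
    refine Finset.sum_congr rfl fun k hk => ?_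
    simp only [Finset.mem_Icc] at hk
    congr 1
    have hq : q - (k-1) = (q - k) + 1 := by omega
    rw [hq, show Finset.Icc 1 ((q-k)+1) = insert 1 (Finset.Icc 2 ((q-k)+1)) by
        ext a; simp; omega,
      Finset.sum_insert (by simp)]
    have hb : ∑ j ∈ Finset.Icc 2 ((q-k)+1), C (k-1+j) (x (t - (j:ℤ)) - xπ (t - (j:ℤ)))
        = ∑ i ∈ Finset.Icc 1 (q-k), C (k+i) (x (t-1 - (i:ℤ)) - xπ (t-1 - (i:ℤ))) := by
      refine Finset.sum_nbij' (fun j => j - 1) (fun i => i + 1) ?_ ?_ ?_ ?_ ?_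
      · intro a ha; simp at ha ⊢; omega
      · intro a ha; simp at ha ⊢; omega
      · intro a ha; simp at ha; show a - 1 + 1 = a; omega
      · intro a ha; simp at ha; show a + 1 - 1 = a; omega
      · intro a ha; simp at ha
        have e1 : k - 1 + a = k + (a - 1) := by omega
        have e2 : (t - (a:ℤ)) = (t - 1 - ((a-1:ℕ):ℤ)) := by
          omega
        rw [e1, e2]
    rw [hb]
    rw [show Finset.Icc 0 (q-k) = insert 0 (Finset.Icc 1 (q-k)) by ext a; simp; omega,
      Finset.sum_insert (by simp)]
    simp only [Nat.add_zero, Nat.cast_zero, sub_zero, Nat.cast_one,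
      show k - 1 + 1 = k from by omega, map_sub, Finset.sum_sub_distrib]
    abel
  have hS0 : ‖∑ i ∈ Finset.Icc 1 q, C i (x (t - (i:ℤ)) - xπ (t - (i:ℤ)))‖ = S 0 := by
    simp [hS]
  have hSq : S q = 0 := by simp [hS]
  rw [h1, h2, hS0]
  rcases Nat.eq_zero_or_pos q with hq | hq
  · subst hq; simp [hS]
  have hshift : ∑ k ∈ Finset.Icc 1 q, S (k-1) = ∑ m ∈ Finset.Icc 0 (q-1), S m := by
    refine Finset.sum_nbij' (fun k => k - 1) (fun m => m + 1) ?_ ?_ ?_ ?_ ?_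
    · intro a ha; simp at ha ⊢; omega
    · intro a ha; simp at ha ⊢; omega
    · intro a ha; simp at ha; show a - 1 + 1 = a; omega
    · intro a ha; simp at ha; show a + 1 - 1 = a; omega
    · intro a ha; rfl
  rw [hshift,
    show Finset.Icc 0 (q-1) = (Finset.Icc 0 q).erase q by ext a; simp; omega,
    Finset.sum_erase_eq_sub (by simp), hSq,
    show Finset.Icc 0 q = insert 0 (Finset.Icc 1 q) by ext a; simp; omega,
    Finset.sum_insert (by simp)]
  ring

/-- Feasibility invariant for ERL with multi-step memory: if the prefix
constraint holds at step t−1 then the expert action x^π_t is feasible at step t;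
consequently, if ERL's actions satisfy the constraint at every step 1..T, then
cost(ERL) ≤ λ·cost(π) + B. -/
theorem stmt10 {E : Type*} [NormedAddCommGroup E] [NormedSpace ℝ E]
    (T : ℤ) (q : ℕ) (C : ℕ → E →L[ℝ] E) (f : ℤ → E → ℝ) (hf : ∀ t z, 0 ≤ f t z)
    (lam B : ℝ) (hlam : 1 ≤ lam) (hB : 0 ≤ B)
    (x xπ : ℤ → E) (hinit : ∀ s : ℤ, s ≤ 0 → x s = xπ s)
    (t : ℤ) (ht : 1 ≤ t)
    (hprev : costM q C f x (t - 1) + Gres q C (x (t - 1)) x xπ (t - 1) ≤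
      lam * costM q C f xπ (t - 1) + B) :
    (costM q C f x (t - 1) + f t (xπ t)
        + ‖xπ t - ∑ i ∈ Finset.Icc 1 q, C i (x (t - (i : ℤ)))‖
        + Gres q C (xπ t) x xπ t ≤ lam * costM q C f xπ t + B) ∧
      ((∀ τ ∈ Finset.Icc (1 : ℤ) T,
          costM q C f x (τ - 1) + f τ (x τ)
              + ‖x τ - ∑ i ∈ Finset.Icc 1 q, C i (x (τ - (i : ℤ)))‖
              + Gres q C (x τ) x xπ τ ≤ lam * costM q C f xπ τ + B) →
        costM q C f x T ≤ lam * costM q C f xπ T + B) := by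
  constructor
  · have htri : ‖xπ t - ∑ i ∈ Finset.Icc 1 q, C i (x (t - (i:ℤ)))‖ ≤
        ‖xπ t - ∑ i ∈ Finset.Icc 1 q, C i (xπ (t - (i:ℤ)))‖
          + ‖∑ i ∈ Finset.Icc 1 q, C i (x (t - (i:ℤ)) - xπ (t - (i:ℤ)))‖ := by
      have : xπ t - ∑ i ∈ Finset.Icc 1 q, C i (x (t - (i:ℤ)))
          = (xπ t - ∑ i ∈ Finset.Icc 1 q, C i (xπ (t - (i:ℤ))))
            - ∑ i ∈ Finset.Icc 1 q, C i (x (t - (i:ℤ)) - xπ (t - (i:ℤ))) := by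
        simp only [map_sub, Finset.sum_sub_distrib]; abel
      rw [this]
      exact norm_sub_le _ _
    have hkey := key_telescope q C x xπ t
    have hpos : 0 ≤ f t (xπ t) + ‖xπ t - ∑ i ∈ Finset.Icc 1 q, C i (xπ (t - (i:ℤ)))‖ :=
      add_nonneg (hf _ _) (norm_nonneg _)
    have hstep := costM_succ q C f xπ t ht
    nlinarith [hprev, htri, hkey, hpos, hstep, mul_nonneg (sub_nonneg.2 hlam) hpos]
  · intro hall
    rcases le_or_gt 1 T with hT | hT
    · have h := hall T (by simp [hT])
      have hstep := costM_succ q C f x T hT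
      have := Gres_nonneg q C (x T) x xπ T
      linarith
    · have h1 : costM q C f x T = 0 := by
        unfold costM; rw [Finset.Icc_eq_empty (by omega)]; simp
      have h2 : costM q C f xπ T = 0 := by
        unfold costM; rw [Finset.Icc_eq_empty (by omega)]; simp
      rw [h1, h2]; linarith
end
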